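/- arXiv:1104.5697 — 4 statements merged into one kernel-verified Lean document; each statement's English description precedes it below -/
import Mathlib

section
/- Let m, n ≥ 2 be natural numbers and a, b positive natural numbers with gcd(a,b) = 1 and m^a = n^b. Then the subgroup {k·log m + ℓ·log n : k, ℓ ∈ ℤ} of (ℝ, +) equals ((1/b)·log m)·ℤ. -/
/-! If `a x = b y` with `a, b` coprime, then `x` and `y` are both integer multiples of `x / b`,
and conversely a Bézout relation `u a + v b = 1` gives `x / b = v x + u y`.
Here `x = log m`, `y = log n`, and `a log m = b log n` is the logarithm of `m ^ a = n ^ b`. -/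

theorem setOf_intCombination_eq_setOf_zmultiple {K : Type*} [Field K] [CharZero K] {a b : ℕ}
    (hb : b ≠ 0) (hab : Nat.Coprime a b) {x y : K} (h : a * x = b * y) :
    {r : K | ∃ k l : ℤ, r = k * x + l * y} = {r : K | ∃ N : ℤ, r = N * ((1 / (b : K)) * x)} := by
  have hb' : (b : K) ≠ 0 := Nat.cast_ne_zero.mpr hb
  have hy : y = a / b * x := by
    field_simp
    linear_combination -h
  obtain ⟨u, v, huv⟩ := Nat.isCoprime_iff_coprime.mpr hab
  have huv' : (u : K) * a + v * b = 1 := by exact_mod_cast huv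
  ext r
  simp only [Set.mem_ofPred_eq, hy]
  constructor
  · rintro ⟨k, l, rfl⟩
    exact ⟨k * b + l * a, by push_cast; field_simp⟩
  · rintro ⟨N, rfl⟩
    refine ⟨N * v, N * u, ?_⟩
    push_cast
    field_simp
    linear_combination (-(N : K) * x) * huv'

theorem stmt2_general (m n a b : ℕ) (hb : 0 < b)
    (hgcd : Nat.gcd a b = 1) (hpow : m ^ a = n ^ b) :
    {r : ℝ | ∃ k l : ℤ, r = k * Real.log m + l * Real.log n} =
      {r : ℝ | ∃ N : ℤ, r = N * ((1 / (b : ℝ)) * Real.log m)} := by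
  refine setOf_intCombination_eq_setOf_zmultiple hb.ne' hgcd ?_
  rw [← Real.log_pow, ← Real.log_pow]
  exact_mod_cast congrArg Real.log (congrArg (Nat.cast (R := ℝ)) hpow)

theorem stmt2 (m n a b : ℕ) (hm : 2 ≤ m) (hn : 2 ≤ n) (ha : 0 < a) (hb : 0 < b)
    (hgcd : Nat.gcd a b = 1) (hpow : m ^ a = n ^ b) :
    {r : ℝ | ∃ k l : ℤ, r = k * Real.log m + l * Real.log n} =
      {r : ℝ | ∃ N : ℤ, r = N * ((1 / (b : ℝ)) * Real.log m)} :=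
  stmt2_general m n a b hb hgcd hpow
end

section
/- Let m, n ≥ 2 be natural numbers and a, b positive natural numbers with gcd(a,b) = 1 and m^a = n^b. Then the closure in ℝ of the set {m^k · n^ℓ : k, ℓ ∈ ℤ} equals {0} ∪ {(m^{1/b})^N : N ∈ ℤ}, where m^{1/b} denotes the positive real b-th root of m. -/
/-!
With `r = m ^ (1 / b)` we have `m = r ^ b` and `n = r ^ a`, so by Bézout the products
`m ^ k * n ^ l` are exactly the integer powers of `r`. Taking logarithms sends these powers onto
the discrete, hence closed, subgroup `ℤ ∙ log r` of `ℝ`, so the only new limit point is `0`.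
-/

open Set Filter Topology

lemma setOf_zpow_mul_zpow_eq_range_zpow {G₀ : Type*} [GroupWithZero G₀] {x : G₀} (hx : x ≠ 0)
    {a b : ℤ} (hab : IsCoprime a b) :
    {y | ∃ k l : ℤ, y = (x ^ a) ^ k * (x ^ b) ^ l} = range (x ^ · : ℤ → G₀) := by
  have hprod (k l : ℤ) : (x ^ a) ^ k * (x ^ b) ^ l = x ^ (a * k + b * l) := by
    rw [← zpow_mul, ← zpow_mul, zpow_add₀ hx]
  ext y
  constructor
  · rintro ⟨k, l, rfl⟩
    exact ⟨_, (hprod k l).symm⟩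
  · rintro ⟨N, rfl⟩
    obtain ⟨u, v, huv⟩ := hab
    exact ⟨u * N, v * N, by rw [hprod]; congr 1; linear_combination -N * huv⟩

lemma rpow_inv_natCast_pow_of_pow_eq {x y : ℝ} {a b : ℕ} (hx : 0 ≤ x) (hy : 0 ≤ y)
    (hb : b ≠ 0) (h : x ^ a = y ^ b) : (x ^ (b⁻¹ : ℝ)) ^ a = y := by
  rw [← Real.rpow_natCast, ← Real.rpow_mul hx, mul_comm, Real.rpow_mul hx, Real.rpow_natCast, h,
    Real.pow_rpow_inv_natCast hy hb]

section ZPow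

variable {r : ℝ}

lemma closure_range_zpow_subset (hr : 0 < r) :
    closure (range (r ^ · : ℤ → ℝ)) ⊆ insert 0 (range (r ^ · : ℤ → ℝ)) := by
  intro x hx
  have hx0 : 0 ≤ x :=
    closure_minimal (range_subset_iff.2 fun N => (zpow_pos hr N).le) isClosed_Ici hx
  rcases hx0.eq_or_lt with rfl | hx0
  · exact mem_insert _ _
  have hlog : Real.log '' range (r ^ · : ℤ → ℝ) ⊆ AddSubgroup.zmultiples (Real.log r) := by
    rintro _ ⟨_, ⟨N, rfl⟩, rfl⟩
    exact ⟨N, by rw [Real.log_zpow]; exact zsmul_eq_mul _ _⟩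
  obtain ⟨N, hN⟩ : Real.log x ∈ AddSubgroup.zmultiples (Real.log r) :=
    closure_minimal hlog AddSubgroup.isClosed_of_discrete
      (mem_closure_image (Real.continuousAt_log hx0.ne') hx)
  refine mem_insert_of_mem _ ⟨N, Real.log_injOn_pos (zpow_pos hr N) hx0 ?_⟩
  rw [Real.log_zpow, ← hN]
  exact (zsmul_eq_mul _ _).symm

lemma zero_mem_closure_range_zpow (hr : 1 < r) : (0 : ℝ) ∈ closure (range (r ^ · : ℤ → ℝ)) := by
  have hlim : Tendsto (fun j : ℕ => r ^ (-(j : ℤ))) atTop (𝓝 0) := by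
    simp only [zpow_neg, zpow_natCast, ← inv_pow]
    exact tendsto_pow_atTop_nhds_zero_of_lt_one (by positivity) (inv_lt_one_of_one_lt₀ hr)
  exact mem_closure_of_tendsto hlim (Eventually.of_forall fun j => mem_range_self _)

theorem closure_range_zpow (hr : 1 < r) :
    closure (range (r ^ · : ℤ → ℝ)) = insert 0 (range (r ^ · : ℤ → ℝ)) :=
  (closure_range_zpow_subset (by linarith)).antisymm
    (insert_subset (zero_mem_closure_range_zpow hr) subset_closure)

end ZPow

theorem stmt3_general (m n a b : ℕ) (hm : 2 ≤ m) (hb : 0 < b)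
    (hgcd : Nat.gcd a b = 1) (hpow : m ^ a = n ^ b) :
    closure {x : ℝ | ∃ k l : ℤ, x = (m : ℝ) ^ k * (n : ℝ) ^ l} =
      insert (0 : ℝ) {x : ℝ | ∃ N : ℤ, x = ((m : ℝ) ^ ((1 : ℝ) / (b : ℝ))) ^ N} := by
  set r : ℝ := (m : ℝ) ^ ((1 : ℝ) / (b : ℝ)) with hr
  rw [one_div] at hr
  have hm0 : (0 : ℝ) ≤ m := Nat.cast_nonneg m
  have hmr : (m : ℝ) = r ^ (b : ℤ) := by
    rw [zpow_natCast, hr, Real.rpow_inv_natCast_pow hm0 hb.ne']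
  have hnr : (n : ℝ) = r ^ (a : ℤ) := by
    rw [zpow_natCast, hr, rpow_inv_natCast_pow_of_pow_eq hm0 (Nat.cast_nonneg n) hb.ne'
      (by exact_mod_cast hpow)]
  have hr1 : 1 < r := by
    rw [hr]
    exact Real.one_lt_rpow (by exact_mod_cast hm) (by positivity)
  have hba : IsCoprime (b : ℤ) a := Nat.isCoprime_iff_coprime.2 (Nat.coprime_comm.1 hgcd)
  rw [hmr, hnr, setOf_zpow_mul_zpow_eq_range_zpow (by positivity) hba, closure_range_zpow hr1]
  simp only [range, eq_comm]

theorem stmt3 (m n a b : ℕ) (hm : 2 ≤ m) (hn : 2 ≤ n) (ha : 0 < a) (hb : 0 < b)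
    (hgcd : Nat.gcd a b = 1) (hpow : m ^ a = n ^ b) :
    closure {x : ℝ | ∃ k l : ℤ, x = (m : ℝ) ^ k * (n : ℝ) ^ l} =
      insert (0 : ℝ) {x : ℝ | ∃ N : ℤ, x = ((m : ℝ) ^ ((1 : ℝ) / (b : ℝ))) ^ N} :=
  stmt3_general m n a b hm hb hgcd hpow
end

section
/- Let m, n ≥ 2 be natural numbers with (log m)/(log n) irrational. Then the closure in ℝ of the set {m^k · n^ℓ : k, ℓ ∈ ℤ} equals [0, ∞). -/
/-! Taking logarithms, the products `m ^ k * n ^ l` are the exponentials of the additive subgroup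
of `ℝ` generated by `log m` and `log n`. That subgroup is dense because the ratio of its
generators is irrational, and `exp` carries a dense subset of `ℝ` to a dense subset of `(0, ∞)`. -/

open Real Set

theorem Real.closure_exp_image_of_dense {s : Set ℝ} (hs : Dense s) :
    closure (exp '' s) = Ici 0 := by
  refine (closure_minimal ?_ isClosed_Ici).antisymm ?_
  · rintro _ ⟨x, -, rfl⟩
    exact (exp_pos x).le
  · calc Ici (0 : ℝ) = closure (exp '' univ) := by rw [image_univ, range_exp, closure_Ioi]
      _ ⊆ closure (exp '' s) := by
        rw [← hs.closure_eq]
        exact closure_minimal (image_closure_subset_closure_image continuous_exp) isClosed_closure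

theorem Real.exp_zsmul_log_add_zsmul_log {a b : ℝ} (ha : 0 < a) (hb : 0 < b) (k l : ℤ) :
    exp (k • log a + l • log b) = a ^ k * b ^ l := by
  rw [exp_add, zsmul_eq_mul, zsmul_eq_mul, mul_comm (k : ℝ), mul_comm (l : ℝ),
    ← rpow_def_of_pos ha, ← rpow_def_of_pos hb, rpow_intCast, rpow_intCast]

theorem Real.setOf_zpow_mul_zpow_eq_exp_image {a b : ℝ} (ha : 0 < a) (hb : 0 < b) :
    {x : ℝ | ∃ k l : ℤ, x = a ^ k * b ^ l} = exp '' AddSubgroup.closure {log a, log b} := by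
  ext x
  simp only [mem_ofPred_eq, mem_image, SetLike.mem_coe, AddSubgroup.mem_closure_pair]
  constructor
  · rintro ⟨k, l, rfl⟩
    exact ⟨_, ⟨k, l, rfl⟩, exp_zsmul_log_add_zsmul_log ha hb k l⟩
  · rintro ⟨_, ⟨k, l, rfl⟩, rfl⟩
    exact ⟨k, l, exp_zsmul_log_add_zsmul_log ha hb k l⟩

theorem Real.closure_setOf_zpow_mul_zpow {a b : ℝ} (ha : 0 < a) (hb : 0 < b)
    (hab : Irrational (log a / log b)) :
    closure {x : ℝ | ∃ k l : ℤ, x = a ^ k * b ^ l} = Ici 0 := by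
  rw [setOf_zpow_mul_zpow_eq_exp_image ha hb]
  exact closure_exp_image_of_dense (dense_addSubgroupClosure_pair_iff.2 hab)

theorem cast_pos_of_irrational_log_div_log {m n : ℕ} (h : Irrational (log m / log n)) :
    (0 : ℝ) < m ∧ (0 : ℝ) < n := by
  constructor <;> refine Nat.cast_pos.2 (Nat.pos_of_ne_zero ?_) <;> rintro rfl <;>
    exact h.ne_zero (by simp)

theorem stmt4_general (m n : ℕ)
    (hirr : Irrational (Real.log m / Real.log n)) :
    closure {x : ℝ | ∃ k l : ℤ, x = (m : ℝ) ^ k * (n : ℝ) ^ l} = Set.Ici (0 : ℝ) :=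
  have ⟨hm, hn⟩ := cast_pos_of_irrational_log_div_log hirr
  closure_setOf_zpow_mul_zpow hm hn hirr

theorem stmt4 (m n : ℕ) (hm : 2 ≤ m) (hn : 2 ≤ n)
    (hirr : Irrational (Real.log m / Real.log n)) :
    closure {x : ℝ | ∃ k l : ℤ, x = (m : ℝ) ^ k * (n : ℝ) ^ l} = Set.Ici (0 : ℝ) :=
  stmt4_general m n hirr
end

section
/- Let m, n ≥ 2 be natural numbers. The subgroup (2π/log m)·ℤ ∩ (2π/log n)·ℤ of ℝ is trivial ({0}) if (log m)/(log n) is irrational, and equals (2πb/log m)·ℤ = (2πa/log n)·ℤ if a, b are coprime positive integers with m^a = n^b. -/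
/-!
`{k * c | k ∈ ℤ}` is the cyclic subgroup `zmultiples c`, and for `c = 2π / log m`,
`d = 2π / log n` we have `c / d = (log m / log n)⁻¹`. A nonzero common element `k c = j d`
would make `c / d = j / k` rational. If `m ^ a = n ^ b`, then `a log m = b log n`, i.e.
`b c = a d`, and Bézout `u a + v b = 1` writes every common element `x = k c = j d` as
`x = u (a x) + v (b x) = (u j + v k) (b c)`.
-/

open AddSubgroup

theorem setOf_exists_eq_intCast_mul_eq_zmultiples {R : Type*} [Ring R] (c : R) :
    {x : R | ∃ k : ℤ, x = k * c} = zmultiples c := by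
  ext
  simp [mem_zmultiples_iff, zsmul_eq_mul, eq_comm]

theorem AddSubgroup.zmultiples_inf_zmultiples_of_isCoprime {G : Type*} [AddCommGroup G]
    {a b : ℤ} (hab : IsCoprime a b) {c d : G} (h : b • c = a • d) :
    zmultiples c ⊓ zmultiples d = zmultiples (b • c) := by
  refine le_antisymm ?_ (le_inf (zmultiples_le_of_mem (zsmul_mem_zmultiples c b))
    (zmultiples_le_of_mem (h ▸ zsmul_mem_zmultiples d a)))
  rintro _ ⟨⟨k, rfl⟩, ⟨j, hj⟩⟩
  obtain ⟨u, v, huv⟩ := hab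
  exact ⟨u * j + v * k, by
    linear_combination (norm := module) (u * j) • h + (u * a) • hj + huv • (k • c)⟩

theorem AddSubgroup.zmultiples_inf_zmultiples_eq_bot_of_irrational {c d : ℝ}
    (h : Irrational (c / d)) : zmultiples c ⊓ zmultiples d = ⊥ := by
  refine eq_bot_iff.2 fun x ⟨hxc, hxd⟩ => mem_bot.2 ?_
  obtain ⟨k, rfl⟩ := mem_zmultiples_iff.1 hxc
  obtain ⟨j, hj⟩ := mem_zmultiples_iff.1 hxd
  by_contra hx
  have hk : (k : ℝ) ≠ 0 := fun h0 => hx (by rw [Int.cast_eq_zero.1 h0, zero_smul])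
  have hd : d ≠ 0 := fun h0 => hx (by rw [← hj, h0, smul_zero])
  rw [zsmul_eq_mul, zsmul_eq_mul] at hj
  refine h.ne_rat (j / k) ?_
  push_cast
  rw [div_eq_div_iff hd hk]
  linarith

theorem stmt5 (m n : ℕ) (hm : 2 ≤ m) (hn : 2 ≤ n) :
    (Irrational (Real.log m / Real.log n) →
      {x : ℝ | ∃ k : ℤ, x = k * (2 * Real.pi / Real.log m)} ∩
        {x : ℝ | ∃ k : ℤ, x = k * (2 * Real.pi / Real.log n)} = {0}) ∧
    (∀ a b : ℕ, 0 < a → 0 < b → Nat.gcd a b = 1 → m ^ a = n ^ b →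
      ({x : ℝ | ∃ k : ℤ, x = k * (2 * Real.pi / Real.log m)} ∩
        {x : ℝ | ∃ k : ℤ, x = k * (2 * Real.pi / Real.log n)} =
        {x : ℝ | ∃ k : ℤ, x = k * (2 * Real.pi * b / Real.log m)}) ∧
      ({x : ℝ | ∃ k : ℤ, x = k * (2 * Real.pi * b / Real.log m)} =
        {x : ℝ | ∃ k : ℤ, x = k * (2 * Real.pi * a / Real.log n)})) := by
  simp only [setOf_exists_eq_intCast_mul_eq_zmultiples, ← coe_inf]
  refine ⟨fun hirr => ?_, fun a b _ _ hab hpow => ?_⟩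
  · rw [zmultiples_inf_zmultiples_eq_bot_of_irrational, coe_bot]
    rwa [div_div_div_cancel_left' _ _ Real.two_pi_pos.ne', ← inv_div, irrational_inv_iff]
  · have hlog_m : Real.log m ≠ 0 := (Real.log_pos (by exact_mod_cast hm)).ne'
    have hlog_n : Real.log n ≠ 0 := (Real.log_pos (by exact_mod_cast hn)).ne'
    have hlog : a * Real.log m = b * Real.log n := by
      rw [← Real.log_pow, ← Real.log_pow, ← Nat.cast_pow, ← Nat.cast_pow, hpow]
    have hperiod_m : 2 * Real.pi * b / Real.log m = (b : ℤ) • (2 * Real.pi / Real.log m) := by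
      rw [zsmul_eq_mul]; push_cast; ring
    have hperiod_n : 2 * Real.pi * a / Real.log n = (a : ℤ) • (2 * Real.pi / Real.log n) := by
      rw [zsmul_eq_mul]; push_cast; ring
    have hcommon :
        (b : ℤ) • (2 * Real.pi / Real.log m) = (a : ℤ) • (2 * Real.pi / Real.log n) := by
      rw [← hperiod_m, ← hperiod_n, div_eq_div_iff hlog_m hlog_n]
      linear_combination 2 * Real.pi * hlog.symm
    rw [zmultiples_inf_zmultiples_of_isCoprime (Nat.isCoprime_iff_coprime.2 hab) hcommon,
      hperiod_m, hperiod_n, hcommon]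
    exact ⟨rfl, rfl⟩
end
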